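/- The octonionic cosecant, defined by csc(z) := Σ_{n∈ℤ} (−1)ⁿ (z̄ + πn)/|z + πn|⁸, satisfies csc(z) = (1/64)·cot(z/2) − cot(z) for every z ∈ 𝕆 such that z + πn ≠ 0 for all n ∈ ℤ. -/

import Mathlib

noncomputable section
open Real MeasureTheory

/-- The octonions `𝕆`, modeled as `ℝ⁸` with the Euclidean norm, endowed below with the
Cayley–Dickson (octonionic) multiplication. -/
abbrev O8 : Type := EuclideanSpace ℝ (Fin 8)

namespace Octo

/-- The standard basis units `e₀ = 1, e₁, …, e₇`. -/
def ee : Fin 8 → O8 := fun i => EuclideanSpace.single i 1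

/-- The octonionic multiplication table `(eᵢ · eⱼ)`, arising from the Cayley–Dickson doubling
of the quaternions (with `e₄ = e₁e₂`, `e₅ = e₁e₃`, `e₆ = e₂e₃`, `e₇ = (e₁e₂)e₃`). -/
def mulTable : Fin 8 → Fin 8 → O8 :=
  ![![ee 0, ee 1, ee 2, ee 3, ee 4, ee 5, ee 6, ee 7],
    ![ee 1, -ee 0, ee 4, ee 5, -ee 2, -ee 3, -ee 7, ee 6],
    ![ee 2, -ee 4, -ee 0, ee 6, ee 1, ee 7, -ee 3, -ee 5],
    ![ee 3, -ee 5, -ee 6, -ee 0, -ee 7, ee 1, ee 2, ee 4],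
    ![ee 4, ee 2, -ee 1, ee 7, -ee 0, -ee 6, ee 5, -ee 3],
    ![ee 5, ee 3, -ee 7, -ee 1, ee 6, -ee 0, -ee 4, ee 2],
    ![ee 6, ee 7, ee 3, -ee 2, -ee 5, ee 4, -ee 0, -ee 1],
    ![ee 7, -ee 6, ee 5, -ee 4, ee 3, -ee 2, ee 1, -ee 0]]

/-- Octonionic multiplication, extended bilinearly from the multiplication table. -/
instance : Mul O8 := ⟨fun x y => ∑ i : Fin 8, ∑ j : Fin 8, (x i * y j) • mulTable i j⟩

instance : One O8 := ⟨ee 0⟩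

/-- The real part `Re z = x₀` of an octonion. -/
def re (z : O8) : ℝ := z 0

/-- Octonionic conjugation `z̄ = x₀ - x₁e₁ - ⋯ - x₇e₇`. -/
def conj (z : O8) : O8 := (2 * z 0) • ee 0 - z

/-- The real number `r`, viewed as an octonion. -/
def ofReal (r : ℝ) : O8 := r • ee 0

/-- The octonionic Cauchy kernel `q₀(z) = z̄ / |z|⁸`. -/
def q0 (z : O8) : O8 := (‖z‖ ^ 8)⁻¹ • conj z

/-- `u / |u|⁸` (numerator not conjugated). -/
def pk (u : O8) : O8 := (‖u‖ ^ 8)⁻¹ • u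

/-- The octonionic Cauchy–Riemann operator `𝒟f = ∂f/∂x₀ + Σᵢ eᵢ ∂f/∂xᵢ`, applied from the left.
`f` is left 𝕆-regular on `U` if `Dl f z = 0` for all `z ∈ U`. -/
def Dl (f : O8 → O8) (z : O8) : O8 :=
  fderiv ℝ f z (ee 0) + ∑ i : Fin 7, ee i.succ * fderiv ℝ f z (ee i.succ)

/-- The octonionic Cauchy–Riemann operator applied from the right:
`f𝒟 = ∂f/∂x₀ + Σᵢ (∂f/∂xᵢ) eᵢ`. -/
def Dr (f : O8 → O8) (z : O8) : O8 :=
  fderiv ℝ f z (ee 0) + ∑ i : Fin 7, fderiv ℝ f z (ee i.succ) * ee i.succ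

/-- The singly-periodic octonionic monogenic cotangent
`cot z = Σ_{m ∈ ℤ} (z̄ + πm)/|z + πm|⁸`. -/
def octCot (z : O8) : O8 := ∑' m : ℤ, q0 (z + ofReal (π * m))

/-- The octonionic tangent `tan z = - cot (z + π/2)`. -/
def octTan (z : O8) : O8 := - octCot (z + ofReal (π / 2))

/-- The singly-periodic octonionic monogenic cosecant
`csc z = Σ_{n ∈ ℤ} (-1)ⁿ (z̄ + πn)/|z + πn|⁸`. -/
def octCsc (z : O8) : O8 := ∑' n : ℤ, ((-1 : ℝ) ^ n) • q0 (z + ofReal (π * n))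

end Octo


/-!
Split the alternating series into its even and odd parts: `csc z = 2 ∑ₘ q(z + 2πm) - cot z`,
where `q(u) = ū / |u|⁸`. The kernel `q` is homogeneous of degree `-7`, so
`q(z + 2πm) = 2⁻⁷ q(z/2 + πm)` and the even part is `2⁻⁷ cot (z/2)`.
-/

open Filter

lemma summable_inv_norm_add_int_smul_pow {E : Type*} [NormedAddCommGroup E] [NormedSpace ℝ E]
    (x : E) {v : E} (hv : v ≠ 0) {k : ℕ} (hk : 1 < k) :
    Summable fun n : ℤ => (‖x + (n : ℝ) • v‖ ^ k)⁻¹ := by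
  have hv' : 0 < ‖v‖ := norm_pos_iff.mpr hv
  have hlarge : ∀ᶠ n : ℤ in cofinite, 2 * ‖x‖ / ‖v‖ + 1 ≤ ‖(n : ℝ)‖ :=
    (tendsto_norm_cocompact_atTop.comp Int.tendsto_coe_cofinite).eventually_ge_atTop _
  refine .of_norm_bounded_eventually
    ((Real.summable_one_div_int_pow.mpr hk).abs.mul_left ((2 / ‖v‖) ^ k)) ?_
  filter_upwards [hlarge] with n hn
  rw [Real.norm_eq_abs] at hn
  have hx : 2 * ‖x‖ ≤ |(n : ℝ)| * ‖v‖ := by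
    have : 2 * ‖x‖ / ‖v‖ ≤ |(n : ℝ)| := by linarith
    rwa [div_le_iff₀ hv'] at this
  have hlow : ‖v‖ / 2 * |(n : ℝ)| ≤ ‖x + (n : ℝ) • v‖ := by
    have := norm_sub_le (x + (n : ℝ) • v) x
    rw [add_sub_cancel_left, norm_smul, Real.norm_eq_abs] at this
    linarith
  have hpos : 0 < ‖v‖ / 2 * |(n : ℝ)| := by
    have : 0 ≤ 2 * ‖x‖ / ‖v‖ := by positivity
    have : 0 < |(n : ℝ)| := by linarith
    positivity
  calc ‖(‖x + (n : ℝ) • v‖ ^ k)⁻¹‖ = (‖x + (n : ℝ) • v‖ ^ k)⁻¹ := by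
        rw [Real.norm_eq_abs, abs_of_nonneg (by positivity)]
    _ ≤ ((‖v‖ / 2 * |(n : ℝ)|) ^ k)⁻¹ := inv_anti₀ (by positivity) (by gcongr)
    _ = (2 / ‖v‖) ^ k * |1 / (n : ℝ) ^ k| := by
        rw [abs_div, abs_one, abs_pow, mul_pow, div_pow, div_pow]
        field_simp

lemma neg_one_zpow_smul_eq_two_smul_indicator_sub {E : Type*} [AddCommGroup E] [Module ℝ E]
    (f : ℤ → E) (n : ℤ) :
    ((-1 : ℝ) ^ n) • f n = (2 : ℝ) • {n : ℤ | Even n}.indicator f n - f n := by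
  rcases Int.even_or_odd n with hn | hn
  · rw [hn.neg_one_zpow, Set.indicator_of_mem (s := {n : ℤ | Even n}) hn, one_smul, two_smul,
      add_sub_cancel_right]
  · rw [hn.neg_one_zpow, Set.indicator_of_notMem (s := {n : ℤ | Even n})
      (Int.not_even_iff_odd.mpr hn), smul_zero, zero_sub, neg_one_smul]

lemma tsum_indicator_even {M : Type*} [AddCommMonoid M] [TopologicalSpace M] (f : ℤ → M) :
    ∑' n, {n : ℤ | Even n}.indicator f n = ∑' m : ℤ, f (2 * m) := by
  refine ((mul_right_injective₀ two_ne_zero).tsum_eq fun n hn => ?_).symm.trans <|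
    tsum_congr fun m => Set.indicator_of_mem (s := {n : ℤ | Even n}) (even_two_mul m) f
  obtain ⟨m, rfl⟩ : Even n := Set.support_indicator_subset (s := {n : ℤ | Even n}) hn
  exact ⟨m, two_mul m⟩

lemma Summable.tsum_neg_one_zpow_smul {E : Type*} [NormedAddCommGroup E] [NormedSpace ℝ E]
    [CompleteSpace E] {f : ℤ → E} (hf : Summable f) :
    ∑' n, ((-1 : ℝ) ^ n) • f n = (2 : ℝ) • ∑' m : ℤ, f (2 * m) - ∑' n, f n := by
  rw [tsum_congr (neg_one_zpow_smul_eq_two_smul_indicator_sub f),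
    ((hf.indicator _).const_smul (2 : ℝ)).tsum_sub hf, tsum_const_smul'', tsum_indicator_even]

namespace Octo

lemma conj_apply (u : O8) (i : Fin 8) : conj u i = if i = 0 then u 0 else -u i := by
  by_cases hi : i = 0
  · subst hi
    simp [conj, ee]
    ring
  · simp [conj, ee, hi]

lemma conj_smul (c : ℝ) (u : O8) : conj (c • u) = c • conj u := by
  ext i
  simp only [PiLp.smul_apply, conj_apply, smul_eq_mul]
  split <;> ring

lemma norm_conj (u : O8) : ‖conj u‖ = ‖u‖ := by
  simp only [EuclideanSpace.norm_eq, conj_apply]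
  congr 1
  refine Finset.sum_congr rfl fun i _ => ?_
  split_ifs with hi <;> simp [hi]

lemma norm_q0 (u : O8) : ‖q0 u‖ = (‖u‖ ^ 7)⁻¹ := by
  rcases eq_or_ne ‖u‖ 0 with hu | hu
  · simp [q0, hu]
  · rw [q0, norm_smul, norm_conj, Real.norm_eq_abs, abs_inv, abs_pow, abs_norm]
    field_simp

lemma q0_smul (c : ℝ) (u : O8) : q0 (c • u) = (c / |c| ^ 8) • q0 u := by
  rw [q0, q0, conj_smul, norm_smul, Real.norm_eq_abs, smul_smul, smul_smul, mul_pow, mul_inv]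
  ring_nf

lemma ofReal_mul (a b : ℝ) : ofReal (a * b) = b • ofReal a := by
  rw [ofReal, ofReal, smul_smul, mul_comm]

lemma summable_q0_add_ofReal_pi_mul_int (z : O8) :
    Summable fun n : ℤ => q0 (z + ofReal (π * n)) := by
  have hπ : ofReal π ≠ 0 := by
    rw [ofReal, ee, Ne, smul_eq_zero, not_or]
    exact ⟨pi_ne_zero, by simp⟩
  refine .of_norm ?_
  simpa only [norm_q0, ofReal_mul] using
    summable_inv_norm_add_int_smul_pow z hπ (by norm_num : 1 < 7)

lemma octCot_half_smul (z : O8) :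
    octCot (((1 : ℝ) / 2) • z) =
      (128 : ℝ) • ∑' m : ℤ, q0 (z + ofReal (π * ((2 * m : ℤ) : ℝ))) := by
  rw [octCot, ← tsum_const_smul'']
  refine tsum_congr fun m => ?_
  have harg : ((1 : ℝ) / 2) • z + ofReal (π * m)
      = ((1 : ℝ) / 2) • (z + ofReal (π * ((2 * m : ℤ) : ℝ))) := by
    rw [smul_add, ofReal, ofReal, smul_smul]
    push_cast
    ring_nf
  rw [harg, q0_smul]
  norm_num

end Octo

theorem octCsc_eq_general (z : O8) :
    Octo.octCsc z = (1 / 64 : ℝ) • Octo.octCot (((1 : ℝ) / 2) • z) - Octo.octCot z := by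
  rw [Octo.octCsc, (Octo.summable_q0_add_ofReal_pi_mul_int z).tsum_neg_one_zpow_smul,
    Octo.octCot_half_smul, smul_smul, Octo.octCot]
  norm_num

/-- the octonionic cosecant `csc z = Σ_{n∈ℤ} (-1)ⁿ (z̄+πn)/|z+πn|⁸` satisfies
`csc z = (1/64) cot (z/2) - cot z`. -/
theorem octCsc_eq (z : O8) (h : ∀ n : ℤ, z + Octo.ofReal (π * n) ≠ 0) :
    Octo.octCsc z = (1 / 64 : ℝ) • Octo.octCot (((1 : ℝ) / 2) • z) - Octo.octCot z :=
  octCsc_eq_general z
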